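/- arXiv:1608.06967 — 4 statements merged into one kernel-verified Lean document; each statement's English description precedes it below -/
import Mathlib

section
/- Let Γ be a nonnegative t×u matrix with greatest singular value s > 0, and let r, c be nonnegative unit singular vectors for s. Set X_{k,ℓ} = Γ_{k,ℓ} r_k c_ℓ / s, so that X has total weight 1. Then for every (k,ℓ) with X_{k,ℓ} ≠ 0, the quantity Γ_{k,ℓ}² · (Σ_j X_{k,j}) · (Σ_i X_{i,ℓ}) / X_{k,ℓ}² equals s². Consequently f(X) := ∏_{(k,ℓ): X_{k,ℓ}≠0} (Γ_{k,ℓ}² (Σ_j X_{k,j})(Σ_i X_{i,ℓ}) / X_{k,ℓ}²)^{X_{k,ℓ}} = s². -/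
open Matrix
open scoped Classical

/-!
The singular-vector equations `Γ c = s r` and `Γᵀ r = s c` say exactly that the row sums of
`X` are `r_k²` and its column sums are `c_ℓ²`. Hence every factor of `f(X)` has base
`Γ² r² c² / (Γ r c / s)² = s²`, and the exponents sum to `∑ r_k² = 1`.
-/

open Finset

section SingularCoupling

variable {K : Type*} [Field K]

theorem sq_mul_sq_mul_sq_div_sq_eq {g a b s : K} (h : g * a * b / s ≠ 0) :
    g ^ 2 * a ^ 2 * b ^ 2 / (g * a * b / s) ^ 2 = s ^ 2 := by
  rw [div_pow, ← mul_pow, ← mul_pow, div_div_cancel₀ (pow_ne_zero 2 (div_ne_zero_iff.1 h).1)]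

theorem sum_mul_mul_div_eq_sq_of_mulVec_eq {m n : Type*} [Fintype n] {Γ : Matrix m n K}
    {r : m → K} {c : n → K} {s : K} (hs : s ≠ 0) (h : Γ *ᵥ c = s • r) (k : m) :
    ∑ j, Γ k j * r k * c j / s = r k ^ 2 := by
  have hk : ∑ j, Γ k j * c j = s * r k := by simpa [mulVec, dotProduct] using congrFun h k
  calc ∑ j, Γ k j * r k * c j / s = (∑ j, Γ k j * c j) * r k / s := by
        rw [sum_mul, sum_div]
        exact sum_congr rfl fun j _ => by ring
    _ = r k ^ 2 := by
        rw [hk]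
        field_simp

theorem sum_mul_mul_div_eq_sq_of_transpose_mulVec_eq {m n : Type*} [Fintype m]
    {Γ : Matrix m n K} {r : m → K} {c : n → K} {s : K} (hs : s ≠ 0) (h : Γᵀ *ᵥ r = s • c)
    (ℓ : n) :
    ∑ i, Γ i ℓ * r i * c ℓ / s = c ℓ ^ 2 := by
  rw [← sum_mul_mul_div_eq_sq_of_mulVec_eq hs h ℓ]
  exact sum_congr rfl fun i _ => by rw [transpose_apply, mul_right_comm]

end SingularCoupling

theorem prod_filter_ne_zero_rpow {ι : Type*} (S : Finset ι) (x : ι → ℝ) {a : ℝ} (ha : 0 < a) :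
    ∏ p ∈ S.filter (fun p => x p ≠ 0), a ^ x p = a ^ ∑ p ∈ S, x p := by
  rw [← Real.rpow_sum_of_pos ha, sum_filter_ne_zero]

theorem f_at_singular_point_general {t u : ℕ}
    (Γ : Matrix (Fin t) (Fin u) ℝ) (s : ℝ) (hs : 0 < s)
    (r : Fin t → ℝ) (c : Fin u → ℝ)
    (hr : ∑ i, r i ^ 2 = 1)
    (h1 : Γᵀ.mulVec r = s • c) (h2 : Γ.mulVec c = s • r)
    (X : Matrix (Fin t) (Fin u) ℝ) (hX : ∀ k ℓ, X k ℓ = Γ k ℓ * r k * c ℓ / s) :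
    (∑ k, ∑ ℓ, X k ℓ) = 1 ∧
    (∀ k ℓ, X k ℓ ≠ 0 →
      Γ k ℓ ^ 2 * (∑ j, X k j) * (∑ i, X i ℓ) / X k ℓ ^ 2 = s ^ 2) ∧
    (∏ p ∈ Finset.univ.filter (fun p : Fin t × Fin u => X p.1 p.2 ≠ 0),
        Real.rpow (Γ p.1 p.2 ^ 2 * (∑ j, X p.1 j) * (∑ i, X i p.2) / X p.1 p.2 ^ 2)
          (X p.1 p.2)) = s ^ 2 := by
  have hrow (k) : ∑ j, X k j = r k ^ 2 := by
    simp only [hX]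
    exact sum_mul_mul_div_eq_sq_of_mulVec_eq hs.ne' h2 k
  have hcol (ℓ) : ∑ i, X i ℓ = c ℓ ^ 2 := by
    simp only [hX]
    exact sum_mul_mul_div_eq_sq_of_transpose_mulVec_eq hs.ne' h1 ℓ
  have htot : ∑ k, ∑ ℓ, X k ℓ = 1 := by simp only [hrow, hr]
  have hfactor (k ℓ) (hne : X k ℓ ≠ 0) :
      Γ k ℓ ^ 2 * (∑ j, X k j) * (∑ i, X i ℓ) / X k ℓ ^ 2 = s ^ 2 := by
    rw [hX] at hne
    rw [hrow, hcol, hX]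
    exact sq_mul_sq_mul_sq_div_sq_eq hne
  refine ⟨htot, hfactor, ?_⟩
  rw [prod_congr rfl fun p hp => by rw [hfactor p.1 p.2 (mem_filter.1 hp).2]]
  refine (prod_filter_ne_zero_rpow _ (fun p : Fin t × Fin u => X p.1 p.2) (pow_pos hs 2)).trans
    ?_
  rw [Fintype.sum_prod_type, htot, Real.rpow_one]

/-- Let `Γ` be nonnegative with greatest singular value `s > 0` and nonnegative
unit singular vectors `r, c`.  With `X k ℓ = Γ k ℓ * r k * c ℓ / s`, the matrix `X`
has total weight 1; for every `(k,ℓ)` with `X k ℓ ≠ 0` the quantity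
`Γ k ℓ ² · (column sum) · (row sum) / X k ℓ ²` equals `s²`; and consequently
`f(X) = ∏_{X k ℓ ≠ 0} (Γ k ℓ ² (Σ_j X k j)(Σ_i X i ℓ) / X k ℓ ²)^{X k ℓ} = s²`. -/
theorem f_at_singular_point {t u : ℕ}
    (Γ : Matrix (Fin t) (Fin u) ℝ) (hΓ : ∀ k ℓ, 0 ≤ Γ k ℓ) (s : ℝ) (hs : 0 < s)
    (hgr : IsGreatest {μ : ℝ | ∃ v : Fin u → ℝ, v ≠ 0 ∧ (Γᵀ * Γ).mulVec v = μ • v}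
      (s ^ 2))
    (r : Fin t → ℝ) (c : Fin u → ℝ)
    (hrpos : ∀ i, 0 ≤ r i) (hcpos : ∀ j, 0 ≤ c j)
    (hr : ∑ i, r i ^ 2 = 1) (hc : ∑ j, c j ^ 2 = 1)
    (h1 : Γᵀ.mulVec r = s • c) (h2 : Γ.mulVec c = s • r)
    (X : Matrix (Fin t) (Fin u) ℝ) (hX : ∀ k ℓ, X k ℓ = Γ k ℓ * r k * c ℓ / s) :
    (∑ k, ∑ ℓ, X k ℓ) = 1 ∧
    (∀ k ℓ, X k ℓ ≠ 0 →
      Γ k ℓ ^ 2 * (∑ j, X k j) * (∑ i, X i ℓ) / X k ℓ ^ 2 = s ^ 2) ∧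
    (∏ p ∈ Finset.univ.filter (fun p : Fin t × Fin u => X p.1 p.2 ≠ 0),
        Real.rpow (Γ p.1 p.2 ^ 2 * (∑ j, X p.1 j) * (∑ i, X i p.2) / X p.1 p.2 ^ 2)
          (X p.1 p.2)) = s ^ 2 :=
  f_at_singular_point_general Γ s hs r c hr h1 h2 X hX
end

section
/- Suppose Γ is a nonnegative t×u matrix, s > 0, and X is a nonnegative t×u matrix of total weight 1 with support S such that for all (k,ℓ) ∈ S, Γ_{k,ℓ} √(Σ_j X_{k,j}) √(Σ_i X_{i,ℓ}) / X_{k,ℓ} = s (with row/column sums restricted to S). Define r_k = √(Σ_j X_{k,j}) and c_ℓ = √(Σ_i X_{i,ℓ}). Then r and c are unit vectors, and if additionally Γ_{k,ℓ} = 0 for all (k,ℓ) ∉ S, then Γ c = s·r and Γᵀ r = s·c; in particular s is a singular value of Γ, so s² is an eigenvalue of ΓᵀΓ. -/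
open Matrix

/-- Suppose `Γ` is nonnegative, `s > 0`, and `X` is a nonnegative matrix of total
weight 1 such that on its support `Γ k ℓ √(col sum) √(row sum) / X k ℓ = s`.
With `r k = √(Σ_j X k j)` and `c ℓ = √(Σ_i X i ℓ)`, the vectors `r` and `c` are
unit vectors, and if moreover `Γ` vanishes off the support of `X`, then
`Γ c = s • r` and `Γᵀ r = s • c`; in particular `s` is a singular value of `Γ`
and `s²` is an eigenvalue of `ΓᵀΓ`. -/
theorem lagrange_point_gives_singular_value {t u : ℕ}
    (Γ X : Matrix (Fin t) (Fin u) ℝ)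
    (hΓ : ∀ k ℓ, 0 ≤ Γ k ℓ) (s : ℝ) (hs : 0 < s)
    (hX0 : ∀ k ℓ, 0 ≤ X k ℓ)
    (hw : ∑ k, ∑ ℓ, X k ℓ = 1)
    (hlag : ∀ k ℓ, X k ℓ ≠ 0 →
      Γ k ℓ * Real.sqrt (∑ j, X k j) * Real.sqrt (∑ i, X i ℓ) / X k ℓ = s)
    (r : Fin t → ℝ) (c : Fin u → ℝ)
    (hr : ∀ k, r k = Real.sqrt (∑ j, X k j))
    (hc : ∀ ℓ, c ℓ = Real.sqrt (∑ i, X i ℓ)) :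
    (∑ k, r k ^ 2 = 1) ∧ (∑ ℓ, c ℓ ^ 2 = 1) ∧
    ((∀ k ℓ, X k ℓ = 0 → Γ k ℓ = 0) →
      Γ.mulVec c = s • r ∧ Γᵀ.mulVec r = s • c ∧
      ∃ v : Fin u → ℝ, v ≠ 0 ∧ (Γᵀ * Γ).mulVec v = s ^ 2 • v) := by
  have hrow : ∀ k, r k ^ 2 = ∑ j, X k j := fun k => by
    rw [hr, Real.sq_sqrt (Finset.sum_nonneg fun j _ => hX0 k j)]
  have hcol : ∀ ℓ, c ℓ ^ 2 = ∑ i, X i ℓ := fun ℓ => by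
    rw [hc, Real.sq_sqrt (Finset.sum_nonneg fun i _ => hX0 i ℓ)]
  have h1 : ∑ k, r k ^ 2 = 1 := by
    simp only [hrow]; exact hw
  have h2 : ∑ ℓ, c ℓ ^ 2 = 1 := by
    simp only [hcol]; rw [Finset.sum_comm]; exact hw
  refine ⟨h1, h2, fun hvan => ?_⟩
  have key : ∀ k ℓ, Γ k ℓ * c ℓ * r k = s * X k ℓ := by
    intro k ℓ
    by_cases h : X k ℓ = 0
    · simp [h, hvan k ℓ h]
    · have h' := hlag k ℓ h
      field_simp at h'
      rw [hr, hc]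
      linear_combination h'
  have hΓc : Γ.mulVec c = s • r := by
    funext k
    by_cases hrk : r k = 0
    · have hsum : ∑ j, X k j = 0 := by rw [← hrow, hrk]; ring
      have hXz : ∀ j, X k j = 0 :=
        fun j => (Finset.sum_eq_zero_iff_of_nonneg fun j _ => hX0 k j).mp hsum j
          (Finset.mem_univ j)
      simp [Matrix.mulVec, dotProduct, fun j => hvan k j (hXz j), hrk]
    · apply mul_right_cancel₀ hrk
      have : (∑ ℓ, Γ k ℓ * c ℓ) * r k = ∑ ℓ, s * X k ℓ := by
        rw [Finset.sum_mul]
        exact Finset.sum_congr rfl fun ℓ _ => key k ℓ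
      simp only [Matrix.mulVec, dotProduct, Pi.smul_apply, smul_eq_mul]
      rw [this, ← Finset.mul_sum, ← hrow]
      ring
  have hΓr : Γᵀ.mulVec r = s • c := by
    funext ℓ
    by_cases hcl : c ℓ = 0
    · have hsum : ∑ i, X i ℓ = 0 := by rw [← hcol, hcl]; ring
      have hXz : ∀ i, X i ℓ = 0 :=
        fun i => (Finset.sum_eq_zero_iff_of_nonneg fun i _ => hX0 i ℓ).mp hsum i
          (Finset.mem_univ i)
      simp [Matrix.mulVec, dotProduct, Matrix.transpose_apply,
        fun i => hvan i ℓ (hXz i), hcl]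
    · apply mul_right_cancel₀ hcl
      have : (∑ k, Γ k ℓ * r k) * c ℓ = ∑ k, s * X k ℓ := by
        rw [Finset.sum_mul]
        exact Finset.sum_congr rfl fun k _ => by linear_combination key k ℓ
      simp only [Matrix.mulVec, dotProduct, Matrix.transpose_apply,
        Pi.smul_apply, smul_eq_mul]
      rw [this, ← Finset.mul_sum, ← hcol]
      ring
  refine ⟨hΓc, hΓr, c, ?_, ?_⟩
  · intro hc0
    rw [hc0] at h2
    simp at h2
  · rw [← Matrix.mulVec_mulVec, hΓc, Matrix.mulVec_smul, hΓr, smul_smul, sq]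
end

section
/- Let M be a t×u matrix of sets of permutations (closed under pattern containment). For an admissible nonnegative integer matrix A of total weight n, the number of M-gridded permutations whose cell (k,ℓ) contains exactly A_{k,ℓ} entries equals ∏_{k=1}^t multinomial(Σ_ℓ A_{k,ℓ}; A_{k,1},…,A_{k,u}) · ∏_{ℓ=1}^u multinomial(Σ_k A_{k,ℓ}; A_{1,ℓ},…,A_{t,ℓ}) · ∏_{k,ℓ} |(M_{k,ℓ})_{A_{k,ℓ}}|, where |(M_{k,ℓ})_m| is the number of permutations of length m in M_{k,ℓ}. -/
/-!
Once the cell counts `A` are fixed, so is the gridding: its column divisions are the partial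
sums of the row sums of `A`, its row divisions those of the column sums. On this fixed grid a
permutation is the same as three independent pieces of data: for each column, the row band of
each of its entries (a word with `A k ℓ` letters `ℓ`, counted by a multinomial coefficient);
for each row, the column band each of its values comes from (likewise); and for each cell the
bijection from its positions onto its values, which, read through the increasing enumerations
of both, is the pattern of the cell, an arbitrary element of `(M k ℓ)_{A k ℓ}`.
-/

/-- `σ` (of length `m`) is the pattern of `π` on the set `S` of positions:
there is a strictly increasing enumeration `e` of `S` by `Fin m` such that `σ`
is order isomorphic to the subsequence of `π` at the positions in `S`. -/
def IsPatternOn {m n : ℕ} (σ : Equiv.Perm (Fin m)) (π : Equiv.Perm (Fin n))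
    (S : Finset (Fin n)) : Prop :=
  ∃ e : Fin m → Fin n, StrictMono e ∧ (∀ i, e i ∈ S) ∧ (∀ x ∈ S, ∃ i, e i = x) ∧
    ∀ i j, σ i < σ j ↔ π (e i) < π (e j)

/-- The positions of `π` lying in the cell `(k, ℓ)` of the gridding determined by
the column divisions `col` and row divisions `row`. -/
def cellSet {t u n : ℕ} (col : Fin (t + 1) → ℕ) (row : Fin (u + 1) → ℕ)
    (π : Equiv.Perm (Fin n)) (k : Fin t) (ℓ : Fin u) : Finset (Fin n) :=
  Finset.univ.filter fun i : Fin n =>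
    col k.castSucc ≤ (i : ℕ) ∧ (i : ℕ) < col k.succ ∧
    row ℓ.castSucc ≤ (π i : ℕ) ∧ (π i : ℕ) < row ℓ.succ

/-- An `M`-gridding of the permutation `π` of length `n`: weakly increasing column
and row divisions such that the entries of `π` in each cell `(k, ℓ)` are order
isomorphic to a permutation in the class `M k ℓ`. -/
structure MGridding (t u n : ℕ)
    (M : Fin t → Fin u → ∀ m : ℕ, Set (Equiv.Perm (Fin m)))
    (π : Equiv.Perm (Fin n)) where
  col : Fin (t + 1) → ℕ
  row : Fin (u + 1) → ℕ
  colMono : Monotone col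
  rowMono : Monotone row
  colFirst : col 0 = 0
  colLast : col (Fin.last t) = n
  rowFirst : row 0 = 0
  rowLast : row (Fin.last u) = n
  cells : ∀ (k : Fin t) (ℓ : Fin u), ∃ (m : ℕ) (σ : Equiv.Perm (Fin m)),
    σ ∈ M k ℓ m ∧ IsPatternOn σ π (cellSet col row π k ℓ)

open Finset

namespace Equiv

variable {α β ι : Type*}

def fiberwiseEquiv (p : α → ι) (q : β → ι) :
    {e : α ≃ β // ∀ a, q (e a) = p a} ≃ ∀ i, {a // p a = i} ≃ {b // q b = i} where
  toFun e i := e.1.subtypeEquiv fun a => by rw [e.2 a]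
  invFun Φ := ⟨ofFiberEquiv Φ, ofFiberEquiv_map Φ⟩
  left_inv _ := rfl
  right_inv Φ := by
    funext i
    ext ⟨a, rfl⟩
    rfl

def arrowFiberEquiv (p : α → ι) (γ : Type*) : (α → γ) ≃ ∀ i, {a // p a = i} → γ where
  toFun f i a := f a
  invFun g a := g (p a) ⟨a, rfl⟩
  left_inv _ := rfl
  right_inv g := by
    funext i ⟨a, ha⟩
    subst ha
    rfl

end Equiv

section Counting

variable {α β ι κ : Type*} [Fintype α] [Fintype β] [Fintype ι] [DecidableEq ι]

theorem card_fiberwiseEquiv (p : α → ι) (q : β → ι)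
    (hpq : ∀ i, Fintype.card {a // p a = i} = Fintype.card {b // q b = i}) :
    Nat.card {e : α ≃ β // ∀ a, q (e a) = p a} =
      ∏ i, (Fintype.card {a // p a = i}).factorial := by
  classical
  rw [Nat.card_congr (Equiv.fiberwiseEquiv p q), Nat.card_pi]
  refine prod_congr rfl fun i _ => ?_
  rw [Nat.card_eq_fintype_card, Fintype.card_equiv (Fintype.equivOfCardEq (hpq i))]

theorem card_fun_fiber_card_eq_multinomial (c : ι → ℕ) (hc : Fintype.card α = ∑ i, c i) :
    Nat.card {f : α → ι // ∀ i, Fintype.card {a // f a = i} = c i} =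
      Nat.multinomial univ c := by
  classical
  -- double counting the `(∑ i, c i)!` bijections `α ≃ Σ i, Fin (c i)` by their first coordinate
  let label : (α ≃ Σ i, Fin (c i)) → {f : α → ι // ∀ i, Fintype.card {a // f a = i} = c i} :=
    fun e => ⟨fun a => (e a).1, fun i => by
      rw [Fintype.card_congr (e.subtypeEquiv (q := fun y => y.1 = i) fun a => Iff.rfl),
        Fintype.card_congr (Equiv.sigmaSubtype i), Fintype.card_fin]⟩
  have hfiber (f : {f : α → ι // ∀ i, Fintype.card {a // f a = i} = c i}) :
      Nat.card {e // label e = f} = ∏ i, (c i).factorial := by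
    rw [← prod_congr rfl fun i _ => congrArg Nat.factorial (f.2 i),
      ← card_fiberwiseEquiv f.1 Sigma.fst fun i => by
        rw [f.2 i, Fintype.card_congr (Equiv.sigmaSubtype (β := fun i => Fin (c i)) i),
          Fintype.card_fin]]
    exact Nat.card_congr <| Equiv.subtypeEquivRight fun e => by
      simp [label, Subtype.ext_iff, funext_iff]
  refine Nat.eq_of_mul_eq_mul_right (prod_pos (s := univ) fun i _ => (c i).factorial_pos) ?_
  calc Nat.card {f : α → ι // ∀ i, Fintype.card {a // f a = i} = c i} * ∏ i, (c i).factorial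
      = Nat.card (α ≃ Σ i, Fin (c i)) := by
        rw [Nat.card_congr (Equiv.sigmaFiberEquiv label).symm, Nat.card_sigma,
          sum_congr rfl fun f _ => hfiber f, sum_const, card_univ, smul_eq_mul,
          Nat.card_eq_fintype_card]
    _ = (∑ i, c i).factorial := by
        rw [Nat.card_eq_fintype_card, Fintype.card_equiv (Fintype.equivOfCardEq (by simpa)), hc]
    _ = Nat.multinomial univ c * ∏ i, (c i).factorial := by
        rw [← Nat.multinomial_spec, mul_comm]

theorem card_fun_fiber_card_eq_prod_multinomial [Fintype κ] [DecidableEq κ] (p : α → κ)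
    (A : κ → ι → ℕ) (hp : ∀ k, Fintype.card {a // p a = k} = ∑ i, A k i) :
    Nat.card {f : α → ι // ∀ k i, Fintype.card {a // p a = k ∧ f a = i} = A k i} =
      ∏ k, Nat.multinomial univ (A k) := by
  have hcard (f : α → ι) (k : κ) (i : ι) : Fintype.card {a // p a = k ∧ f a = i} =
      Fintype.card {a : {a // p a = k} // f a = i} :=
    Fintype.card_congr (Equiv.subtypeSubtypeEquivSubtypeInter _ _).symm
  let e : {f : α → ι // ∀ k i, Fintype.card {a // p a = k ∧ f a = i} = A k i} ≃
      ∀ k, {g : {a // p a = k} → ι // ∀ i, Fintype.card {a // g a = i} = A k i} :=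
    ((Equiv.arrowFiberEquiv p ι).subtypeEquiv fun f => by simp only [hcard]; rfl).trans
      Equiv.subtypePiEquivPi
  rw [Nat.card_congr e, Nat.card_pi]
  exact prod_congr rfl fun k _ => card_fun_fiber_card_eq_multinomial (A k) (hp k)

end Counting

section Patterns

variable {m n : ℕ} {π : Equiv.Perm (Fin n)} {S : Finset (Fin n)}

theorem IsPatternOn.card_eq {σ : Equiv.Perm (Fin m)} (h : IsPatternOn σ π S) : #S = m := by
  obtain ⟨e, he, hmem, hsurj, -⟩ := h
  have : univ.image e = S := by
    ext x
    simpa using ⟨by rintro ⟨i, rfl⟩; exact hmem i, hsurj x⟩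
  rw [← this, card_image_of_injective _ he.injective, card_univ, Fintype.card_fin]

theorem IsPatternOn.unique {σ σ' : Equiv.Perm (Fin m)} (h : IsPatternOn σ π S)
    (h' : IsPatternOn σ' π S) : σ = σ' := by
  have hS := h.card_eq
  obtain ⟨e, he, hmem, -, hσ⟩ := h
  obtain ⟨e', he', hmem', -, hσ'⟩ := h'
  obtain rfl : e = e' := by
    rw [orderEmbOfFin_unique hS hmem he, orderEmbOfFin_unique hS hmem' he']
  have hmono : StrictMono (σ' ∘ σ.symm) := fun i j hij => by
    simpa [hσ, hσ'] using (hσ (σ.symm i) (σ.symm j)).1 (by simpa using hij)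
  ext i
  simpa using congrArg Fin.val (hmono.apply_eq (x := σ i)).symm

theorem exists_isPatternOn_mem_iff (W : ∀ m : ℕ, Set (Equiv.Perm (Fin m)))
    {σ₀ : Equiv.Perm (Fin m)} (h₀ : IsPatternOn σ₀ π S) :
    (∃ (k : ℕ) (σ : Equiv.Perm (Fin k)), σ ∈ W k ∧ IsPatternOn σ π S) ↔ σ₀ ∈ W m := by
  refine ⟨fun ⟨k, σ, hσ, h⟩ => ?_, fun h => ⟨m, σ₀, h, h₀⟩⟩
  obtain rfl : k = m := h.card_eq.symm.trans h₀.card_eq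
  rwa [← h.unique h₀]

variable {P Q : Fin n → Prop} [DecidablePred P] [DecidablePred Q]

def patternEquiv (hP : Fintype.card {x // P x} = m) (hQ : Fintype.card {y // Q y} = m) :
    ({x // P x} ≃ {y // Q y}) ≃ Equiv.Perm (Fin m) :=
  Equiv.equivCongr (Fintype.orderIsoFinOfCardEq _ hP).symm.toEquiv
    (Fintype.orderIsoFinOfCardEq _ hQ).symm.toEquiv

theorem isPatternOn_patternEquiv (hP : Fintype.card {x // P x} = m)
    (hQ : Fintype.card {y // Q y} = m) {e : {x // P x} ≃ {y // Q y}}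
    (he : ∀ x, (e x : Fin n) = π x) :
    IsPatternOn (patternEquiv hP hQ e) π (univ.filter P) := by
  let oP := Fintype.orderIsoFinOfCardEq _ hP
  refine ⟨fun i => oP i, Subtype.strictMono_coe _ |>.comp oP.strictMono,
    fun i => by simpa using (oP i).2, fun x hx => ?_, fun i j => ?_⟩
  · exact ⟨oP.symm ⟨x, by simpa using hx⟩, by simp⟩
  · simp [patternEquiv, oP, ← he]

theorem card_perm_fiberwise_isPatternOn {ι : Type*} [Fintype ι] [DecidableEq ι]
    (p q : Fin n → ι) (c : ι → ℕ) (hp : ∀ i, Fintype.card {x // p x = i} = c i)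
    (hq : ∀ i, Fintype.card {y // q y = i} = c i) (W : ι → ∀ m : ℕ, Set (Equiv.Perm (Fin m))) :
    Nat.card {π : Equiv.Perm (Fin n) // (∀ x, q (π x) = p x) ∧
        ∀ i, ∃ (m : ℕ) (σ : Equiv.Perm (Fin m)), σ ∈ W i m ∧
          IsPatternOn σ π (univ.filter (p · = i))} =
      ∏ i, Nat.card {σ : Equiv.Perm (Fin (c i)) // σ ∈ W i (c i)} := by
  rw [← Nat.card_pi]
  refine Nat.card_congr <| (Equiv.subtypeSubtypeEquivSubtypeInter _ _).symm.trans <|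
    ((Equiv.fiberwiseEquiv p q).subtypeEquiv fun π => forall_congr' fun i =>
      exists_isPatternOn_mem_iff (W i)
        (isPatternOn_patternEquiv (hp i) (hq i) fun x => rfl)).trans <|
    Equiv.subtypePiEquivPi.trans <|
    Equiv.piCongrRight fun i => (patternEquiv (hp i) (hq i)).subtypeEquiv fun _ => Iff.rfl

end Patterns

section Cells

variable {n : ℕ} {κ ι : Type*} [DecidableEq κ] [DecidableEq ι]

def cellOf (a : Fin n → κ) (b : Fin n → ι) (π : Equiv.Perm (Fin n)) (k : κ) (ℓ : ι) :
    Finset (Fin n) :=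
  univ.filter fun x => a x = k ∧ b (π x) = ℓ

theorem cellOf_eq_filter {a : Fin n → κ} {b : Fin n → ι} {π : Equiv.Perm (Fin n)}
    {F : Fin n → ι} (hF : ∀ x, b (π x) = F x) (k : κ) (ℓ : ι) :
    cellOf a b π k ℓ = univ.filter fun x => (a x, F x) = (k, ℓ) := by
  ext x
  simp [cellOf, hF]

variable [Fintype κ] [Fintype ι] (a : Fin n → κ) (b : Fin n → ι) (A : κ → ι → ℕ)
  (W : κ → ι → ∀ m : ℕ, Set (Equiv.Perm (Fin m)))

def HasCellPatterns (π : Equiv.Perm (Fin n)) : Prop :=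
  ∀ k ℓ, #(cellOf a b π k ℓ) = A k ℓ ∧
    ∃ (m : ℕ) (σ : Equiv.Perm (Fin m)), σ ∈ W k ℓ m ∧ IsPatternOn σ π (cellOf a b π k ℓ)

theorem card_hasCellPatterns_fiber {F : Fin n → ι} {G : Fin n → κ}
    (hF : ∀ k ℓ, Fintype.card {x // a x = k ∧ F x = ℓ} = A k ℓ)
    (hG : ∀ ℓ k, Fintype.card {y // b y = ℓ ∧ G y = k} = A k ℓ) :
    Nat.card {π // HasCellPatterns a b A W π ∧ ∀ x, (G (π x), b (π x)) = (a x, F x)} =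
      ∏ k, ∏ ℓ, Nat.card {σ : Equiv.Perm (Fin (A k ℓ)) // σ ∈ W k ℓ (A k ℓ)} := by
  have hp : ∀ i : κ × ι, Fintype.card {x // (a x, F x) = i} = A i.1 i.2 := by
    rintro ⟨k, ℓ⟩
    simpa only [Prod.mk.injEq] using hF k ℓ
  have hq : ∀ i : κ × ι, Fintype.card {y // (G y, b y) = i} = A i.1 i.2 := by
    rintro ⟨k, ℓ⟩
    simpa only [Prod.mk.injEq, and_comm] using hG ℓ k
  rw [← Fintype.prod_prod_type', ← card_perm_fiberwise_isPatternOn _ _ _ hp hq]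
  refine Nat.card_congr (Equiv.subtypeEquivRight fun π => ?_)
  constructor
  · rintro ⟨hπ, hlab⟩
    refine ⟨hlab, fun ⟨k, ℓ⟩ => ?_⟩
    rw [← cellOf_eq_filter fun x => congrArg Prod.snd (hlab x)]
    exact (hπ k ℓ).2
  · rintro ⟨hlab, hπ⟩
    refine ⟨fun k ℓ => ?_, hlab⟩
    rw [cellOf_eq_filter fun x => congrArg Prod.snd (hlab x), ← Fintype.card_subtype]
    exact ⟨hp (k, ℓ), hπ (k, ℓ)⟩

theorem card_hasCellPatterns (ha : ∀ k, Fintype.card {x // a x = k} = ∑ ℓ, A k ℓ)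
    (hb : ∀ ℓ, Fintype.card {y // b y = ℓ} = ∑ k, A k ℓ) :
    Nat.card {π // HasCellPatterns a b A W π} =
      (∏ k, Nat.multinomial univ (A k)) * (∏ ℓ, Nat.multinomial univ (A · ℓ)) *
        ∏ k, ∏ ℓ, Nat.card {σ : Equiv.Perm (Fin (A k ℓ)) // σ ∈ W k ℓ (A k ℓ)} := by
  let Rows := {F : Fin n → ι // ∀ k ℓ, Fintype.card {x // a x = k ∧ F x = ℓ} = A k ℓ}
  let Cols := {G : Fin n → κ // ∀ ℓ k, Fintype.card {y // b y = ℓ ∧ G y = k} = A k ℓ}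
  let shape : {π // HasCellPatterns a b A W π} → Rows × Cols := fun π =>
    (⟨fun x => b (π.1 x), fun k ℓ => by
      rw [Fintype.card_subtype]; exact (π.2 k ℓ).1⟩,
     ⟨fun y => a (π.1.symm y), fun ℓ k => by
      rw [← (π.2 k ℓ).1, cellOf, ← Fintype.card_subtype]
      exact Fintype.card_congr (π.1.symm.subtypeEquiv fun y => by simp [and_comm])⟩)
  have hshape (F : Rows) (G : Cols) (π : {π // HasCellPatterns a b A W π}) :
      shape π = (F, G) ↔ ∀ x, (G.1 (π.1 x), b (π.1 x)) = (a x, F.1 x) := by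
    rw [Prod.mk.injEq, Subtype.ext_iff, Subtype.ext_iff, funext_iff, funext_iff]
    refine ⟨fun ⟨hF, hG⟩ x => by simp [← hF, ← hG], fun hlab => ⟨fun x => ?_, fun y => ?_⟩⟩
    · exact congrArg Prod.snd (hlab x)
    · simpa using (congrArg Prod.fst (hlab (π.1.symm y))).symm
  have hfiber (FG : Rows × Cols) : Nat.card {π // shape π = FG} =
      ∏ k, ∏ ℓ, Nat.card {σ : Equiv.Perm (Fin (A k ℓ)) // σ ∈ W k ℓ (A k ℓ)} := by
    rw [← card_hasCellPatterns_fiber a b A W FG.1.2 FG.2.2]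
    exact Nat.card_congr ((Equiv.subtypeEquivRight (hshape FG.1 FG.2)).trans
      (Equiv.subtypeSubtypeEquivSubtypeInter (HasCellPatterns a b A W)
        fun π => ∀ x, (FG.2.1 (π x), b (π x)) = (a x, FG.1.1 x)))
  rw [Nat.card_congr (Equiv.sigmaFiberEquiv shape).symm, Nat.card_sigma,
    sum_congr rfl fun FG _ => hfiber FG, sum_const, card_univ, smul_eq_mul,
    Fintype.card_prod, ← Nat.card_eq_fintype_card, ← Nat.card_eq_fintype_card,
    card_fun_fiber_card_eq_prod_multinomial a A ha,
    card_fun_fiber_card_eq_prod_multinomial b (fun ℓ k => A k ℓ) hb]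

end Cells

theorem Fin.partialSum_last {w : ℕ} (f : Fin w → ℕ) : Fin.partialSum f (Fin.last w) = ∑ i, f i := by
  rw [Fin.partialSum, Fin.val_last, List.take_of_length_le (by simp), List.sum_ofFn]

theorem Fin.monotone_partialSum {w : ℕ} (f : Fin w → ℕ) : Monotone (Fin.partialSum f) :=
  Fin.monotone_iff_le_succ.2 fun i => by simp [Fin.partialSum_succ]

section Bands

variable {w n : ℕ} {b : Fin (w + 1) → ℕ}

theorem card_filter_perm_mem_Ico (π : Equiv.Perm (Fin n)) {a c : ℕ} (hc : c ≤ n) :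
    #(univ.filter fun i => a ≤ (π i : ℕ) ∧ (π i : ℕ) < c) = c - a := by
  rw [← Nat.card_Ico]
  refine card_bij (fun i _ => (π i : ℕ)) (fun i hi => by simpa using hi)
    (fun i _ j _ h => π.injective (Fin.ext h)) fun v hv => ?_
  obtain ⟨hav, hvc⟩ := mem_Ico.1 hv
  exact ⟨π.symm ⟨v, hvc.trans_le hc⟩, by simpa using ⟨hav, hvc⟩, by simp⟩

theorem Monotone.eq_of_mem_band (hb : Monotone b) {v : ℕ} {ℓ ℓ' : Fin w}
    (h : b ℓ.castSucc ≤ v ∧ v < b ℓ.succ) (h' : b ℓ'.castSucc ≤ v ∧ v < b ℓ'.succ) :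
    ℓ = ℓ' := by
  rcases lt_trichotomy ℓ ℓ' with hlt | heq | hlt
  · have := hb (Fin.succ_le_castSucc_iff.2 hlt); omega
  · exact heq
  · have := hb (Fin.succ_le_castSucc_iff.2 hlt); omega

theorem Monotone.exists_mem_band (hb : Monotone b) {v : ℕ} (h0 : b 0 ≤ v)
    (hv : v < b (Fin.last w)) : ∃ ℓ : Fin w, b ℓ.castSucc ≤ v ∧ v < b ℓ.succ := by
  induction w with
  | zero => exact absurd hv (not_lt.2 h0)
  | succ w ih =>
    by_cases hlt : v < b (Fin.last w).castSucc
    · obtain ⟨ℓ, hℓ⟩ := ih (b := b ∘ Fin.castSucc) (hb.comp Fin.strictMono_castSucc.monotone) h0 hlt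
      exact ⟨ℓ.castSucc, hℓ⟩
    · exact ⟨Fin.last w, not_lt.1 hlt, hv⟩

noncomputable def bandIndex (hb : Monotone b) (h0 : b 0 = 0) (hn : b (Fin.last w) = n)
    (v : Fin n) : Fin w :=
  (hb.exists_mem_band (h0.trans_le v.val.zero_le) (hn ▸ v.isLt)).choose

theorem bandIndex_eq_iff (hb : Monotone b) (h0 : b 0 = 0) (hn : b (Fin.last w) = n)
    (v : Fin n) (ℓ : Fin w) :
    bandIndex hb h0 hn v = ℓ ↔ b ℓ.castSucc ≤ v ∧ (v : ℕ) < b ℓ.succ := by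
  have hspec := (hb.exists_mem_band (h0.trans_le v.val.zero_le) (hn ▸ v.isLt)).choose_spec
  exact ⟨fun h => h ▸ hspec, hb.eq_of_mem_band hspec⟩

theorem card_bandIndex_eq (hb : Monotone b) (h0 : b 0 = 0) (hn : b (Fin.last w) = n)
    (ℓ : Fin w) : Fintype.card {v // bandIndex hb h0 hn v = ℓ} = b ℓ.succ - b ℓ.castSucc := by
  rw [Fintype.card_subtype]
  simp only [bandIndex_eq_iff]
  exact card_filter_perm_mem_Ico 1 ((hb (Fin.le_last _)).trans_eq hn)

theorem card_eq_sum_card_filter_band {α : Type*} (hb : Monotone b) (h0 : b 0 = 0)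
    (hn : b (Fin.last w) = n) (s : Finset α) (g : α → Fin n) :
    #s = ∑ ℓ : Fin w, #(s.filter fun x => b ℓ.castSucc ≤ g x ∧ (g x : ℕ) < b ℓ.succ) := by
  rw [card_eq_sum_card_fiberwise (f := fun x => bandIndex hb h0 hn (g x)) (t := univ)
    fun _ _ => mem_univ _]
  simp only [bandIndex_eq_iff]

theorem eq_partialSum_of_sub_eq (hb : Monotone b) (h0 : b 0 = 0) {f : Fin w → ℕ}
    (h : ∀ ℓ, b ℓ.succ - b ℓ.castSucc = f ℓ) : b = Fin.partialSum f := by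
  funext j
  induction j using Fin.induction with
  | zero => rw [h0, Fin.partialSum_zero]
  | succ ℓ ih =>
    have := hb (Fin.castSucc_le_succ ℓ)
    rw [Fin.partialSum_succ, ← ih, ← h ℓ]
    omega

end Bands

abbrev colBounds {t u : ℕ} (A : Matrix (Fin t) (Fin u) ℕ) : Fin (t + 1) → ℕ :=
  Fin.partialSum fun k => ∑ ℓ, A k ℓ

abbrev rowBounds {t u : ℕ} (A : Matrix (Fin t) (Fin u) ℕ) : Fin (u + 1) → ℕ :=
  Fin.partialSum fun ℓ => ∑ k, A k ℓ

section Griddings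

variable {t u n : ℕ} {M : Fin t → Fin u → ∀ m : ℕ, Set (Equiv.Perm (Fin m))}
  {π : Equiv.Perm (Fin n)}

theorem MGridding.ext {G G' : MGridding t u n M π} (hcol : G.col = G'.col)
    (hrow : G.row = G'.row) : G = G' := by
  cases G; cases G'
  subst hcol hrow
  rfl

variable (G : MGridding t u n M π) {A : Matrix (Fin t) (Fin u) ℕ}
  (hA : ∀ k ℓ, #(cellSet G.col G.row π k ℓ) = A k ℓ)
include hA

theorem MGridding.col_eq_colBounds : G.col = colBounds A := by
  refine eq_partialSum_of_sub_eq G.colMono G.colFirst fun k => ?_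
  rw [← card_filter_perm_mem_Ico 1 ((G.colMono (Fin.le_last _)).trans_eq G.colLast),
    card_eq_sum_card_filter_band G.rowMono G.rowFirst G.rowLast _ π]
  refine sum_congr rfl fun ℓ _ => ?_
  rw [← hA, cellSet, filter_filter]
  simp only [Equiv.Perm.coe_one, id, and_assoc]

theorem MGridding.row_eq_rowBounds : G.row = rowBounds A := by
  refine eq_partialSum_of_sub_eq G.rowMono G.rowFirst fun ℓ => ?_
  rw [← card_filter_perm_mem_Ico π ((G.rowMono (Fin.le_last _)).trans_eq G.rowLast),
    card_eq_sum_card_filter_band G.colMono G.colFirst G.colLast _ id]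
  refine sum_congr rfl fun k _ => ?_
  rw [← hA, cellSet, filter_filter]
  simp only [id]
  congr! 2
  tauto

end Griddings

section CanonicalGridding

variable {t u n : ℕ} (M : Fin t → Fin u → ∀ m : ℕ, Set (Equiv.Perm (Fin m)))
  (A : Matrix (Fin t) (Fin u) ℕ) (hA : ∑ k, ∑ ℓ, A k ℓ = n)
include hA

theorem colBounds_last : colBounds A (Fin.last t) = n := by
  rw [colBounds, Fin.partialSum_last, hA]

theorem rowBounds_last : rowBounds A (Fin.last u) = n := by
  rw [rowBounds, Fin.partialSum_last, sum_comm, hA]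

noncomputable def colIndex : Fin n → Fin t :=
  bandIndex (b := colBounds A) (Fin.monotone_partialSum _) (Fin.partialSum_zero _)
    (colBounds_last A hA)

noncomputable def rowIndex : Fin n → Fin u :=
  bandIndex (b := rowBounds A) (Fin.monotone_partialSum _) (Fin.partialSum_zero _)
    (rowBounds_last A hA)

theorem card_colIndex_eq (k : Fin t) :
    Fintype.card {x // colIndex A hA x = k} = ∑ ℓ, A k ℓ := by
  rw [colIndex, card_bandIndex_eq, colBounds, Fin.partialSum_succ, Nat.add_sub_cancel_left]

theorem card_rowIndex_eq (ℓ : Fin u) :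
    Fintype.card {y // rowIndex A hA y = ℓ} = ∑ k, A k ℓ := by
  rw [rowIndex, card_bandIndex_eq, rowBounds, Fin.partialSum_succ, Nat.add_sub_cancel_left]

theorem cellSet_bounds_eq_cellOf (π : Equiv.Perm (Fin n)) (k : Fin t) (ℓ : Fin u) :
    cellSet (colBounds A) (rowBounds A) π k ℓ =
      cellOf (colIndex A hA) (rowIndex A hA) π k ℓ := by
  ext x
  simp [cellSet, cellOf, colIndex, rowIndex, bandIndex_eq_iff, and_assoc]

noncomputable def griddedEquiv :
    {g : (π : Equiv.Perm (Fin n)) × MGridding t u n M π //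
        ∀ k ℓ, #(cellSet g.2.col g.2.row g.1 k ℓ) = A k ℓ} ≃
      {π // HasCellPatterns (colIndex A hA) (rowIndex A hA) A M π} where
  toFun g := ⟨g.1.1, fun k ℓ => by
    rw [← cellSet_bounds_eq_cellOf A hA, ← g.1.2.col_eq_colBounds g.2,
      ← g.1.2.row_eq_rowBounds g.2]
    exact ⟨g.2 k ℓ, g.1.2.cells k ℓ⟩⟩
  invFun π := ⟨⟨π.1,
    { col := colBounds A
      row := rowBounds A
      colMono := Fin.monotone_partialSum _
      rowMono := Fin.monotone_partialSum _
      colFirst := Fin.partialSum_zero _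
      colLast := colBounds_last A hA
      rowFirst := Fin.partialSum_zero _
      rowLast := rowBounds_last A hA
      cells := fun k ℓ => by
        rw [cellSet_bounds_eq_cellOf A hA]
        exact (π.2 k ℓ).2 }⟩, fun k ℓ => by
    rw [cellSet_bounds_eq_cellOf A hA]
    exact (π.2 k ℓ).1⟩
  left_inv := fun ⟨⟨π, G⟩, hG⟩ => Subtype.ext <| congrArg (Sigma.mk π) <|
    MGridding.ext (G.col_eq_colBounds hG).symm (G.row_eq_rowBounds hG).symm
  right_inv _ := rfl

end CanonicalGridding

theorem count_gridded_with_cell_counts_general (t u n : ℕ)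
    (M : Fin t → Fin u → ∀ m : ℕ, Set (Equiv.Perm (Fin m)))
    (A : Matrix (Fin t) (Fin u) ℕ)
    (hA : ∑ k, ∑ ℓ, A k ℓ = n) :
    Nat.card {g : (π : Equiv.Perm (Fin n)) × MGridding t u n M π //
        ∀ (k : Fin t) (ℓ : Fin u), (cellSet g.2.col g.2.row g.1 k ℓ).card = A k ℓ} =
      (∏ k, Nat.multinomial Finset.univ (fun ℓ => A k ℓ)) *
        (∏ ℓ, Nat.multinomial Finset.univ (fun k => A k ℓ)) *
        ∏ k, ∏ ℓ, Nat.card {σ : Equiv.Perm (Fin (A k ℓ)) // σ ∈ M k ℓ (A k ℓ)} := by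
  rw [Nat.card_congr (griddedEquiv M A hA)]
  exact card_hasCellPatterns _ _ A M (card_colIndex_eq A hA) (card_rowIndex_eq A hA)

/-- Proposition 1: for an admissible nonnegative integer matrix `A` of weight `n`,
the number of `M`-gridded permutations whose cell `(k,ℓ)` contains exactly
`A k ℓ` entries is
`∏_k multinomial(A k,·) · ∏_ℓ multinomial(A ·,ℓ) · ∏_{k,ℓ} |(M k ℓ)_{A k ℓ}|`. -/
theorem count_gridded_with_cell_counts (t u n : ℕ)
    (M : Fin t → Fin u → ∀ m : ℕ, Set (Equiv.Perm (Fin m)))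
    (hM : ∀ (k : Fin t) (ℓ : Fin u) {m n' : ℕ} (σ : Equiv.Perm (Fin m))
      (π : Equiv.Perm (Fin n')) (S : Finset (Fin n')),
      π ∈ M k ℓ n' → IsPatternOn σ π S → σ ∈ M k ℓ m)
    (A : Matrix (Fin t) (Fin u) ℕ)
    (hA : ∑ k, ∑ ℓ, A k ℓ = n)
    (hAdm : ∀ (k : Fin t) (ℓ : Fin u),
      (∀ (m : ℕ) (σ : Equiv.Perm (Fin m)), σ ∉ M k ℓ m) → A k ℓ = 0) :
    Nat.card {g : (π : Equiv.Perm (Fin n)) × MGridding t u n M π //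
        ∀ (k : Fin t) (ℓ : Fin u), (cellSet g.2.col g.2.row g.1 k ℓ).card = A k ℓ} =
      (∏ k, Nat.multinomial Finset.univ (fun ℓ => A k ℓ)) *
        (∏ ℓ, Nat.multinomial Finset.univ (fun k => A k ℓ)) *
        ∏ k, ∏ ℓ, Nat.card {σ : Equiv.Perm (Fin (A k ℓ)) // σ ∈ M k ℓ (A k ℓ)} :=
  count_gridded_with_cell_counts_general t u n M A hA
end

section
/- Let Γ be a nonnegative t×u matrix whose nonzero entries are all ≥ 1, and let f be defined on the compact set 𝒜 = {X ∈ [0,1]^{t×u} : Σ X_{k,ℓ} = 1 and X_{k,ℓ} = 0 whenever Γ_{k,ℓ} = 0} by f(X) = ∏_{(k,ℓ): X_{k,ℓ}>0} (Γ_{k,ℓ}² (Σ_j X_{k,j})(Σ_i X_{i,ℓ}) / X_{k,ℓ}²)^{X_{k,ℓ}}. Then the maximum value of f on 𝒜 equals the greatest eigenvalue of ΓᵀΓ. -/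
/-!
Let `r`, `c` be the row and column sums of an admissible `X`. On the support of `X` the factor at
`(k, ℓ)` is `q ^ (2 X k ℓ)` with `q = Γ k ℓ √(r k c ℓ) / X k ℓ`, so weighted AM-GM gives
`f X ≤ (√r ⬝ Γ √c)² ≤ λ ‖√r‖² ‖√c‖² = λ`, the middle step being Cauchy–Schwarz together with
`λ • 1 - ΓᵀΓ ≥ 0`. Conversely `ΓᵀΓ` is entrywise nonnegative, so `λ` has a nonnegative
eigenvector `v`, and `X k ℓ ∝ (Γ v) k Γ k ℓ v ℓ` makes every factor of `f X` equal to `λ`.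
-/

open Matrix Finset
open scoped ComplexOrder

variable {m n R 𝕜 : Type*} [Fintype m] [Fintype n]

namespace Matrix

lemma IsHermitian.eigenvalues_le_of_mem_upperBounds [RCLike 𝕜] [DecidableEq n]
    {A : Matrix n n 𝕜} (hA : A.IsHermitian) {lam : ℝ}
    (h : lam ∈ upperBounds {μ : ℝ | ∃ v : n → 𝕜, v ≠ 0 ∧ A *ᵥ v = μ • v}) (i : n) :
    hA.eigenvalues i ≤ lam :=
  h ⟨_, fun h0 => hA.eigenvectorBasis.orthonormal.ne_zero i (WithLp.ofLp_injective 2 h0),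
    hA.mulVec_eigenvectorBasis i⟩

lemma IsHermitian.posSemidef_smul_one_sub [RCLike 𝕜] [DecidableEq n] {A : Matrix n n 𝕜}
    (hA : A.IsHermitian) {lam : ℝ} (h : ∀ i, hA.eigenvalues i ≤ lam) :
    (lam • 1 - A).PosSemidef := by
  have hdiag : diagonal (RCLike.ofReal ∘ (lam • 1 - hA.eigenvalues)) =
      lam • (1 : Matrix n n 𝕜) - diagonal (RCLike.ofReal ∘ hA.eigenvalues) := by
    ext i j
    by_cases hij : i = j <;> simp [hij, RCLike.real_smul_eq_coe_mul]
  have hconj : lam • 1 - A = Unitary.conjStarAlgAut 𝕜 _ hA.eigenvectorUnitary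
      (diagonal (RCLike.ofReal ∘ (lam • 1 - hA.eigenvalues))) := by
    rw [hdiag, RCLike.real_smul_eq_coe_smul (K := 𝕜), map_sub, map_smul, map_one,
      ← hA.spectral_theorem]
  rw [hconj, Unitary.conjStarAlgAut_apply, Unitary.isUnit_coe.posSemidef_star_right_conjugate_iff]
  simpa [posSemidef_diagonal_iff, Pi.le_def] using h

lemma dotProduct_smul_one_sub_mulVec [CommRing R] [DecidableEq n] (A : Matrix n n R) (lam : R)
    (x : n → R) :
    x ⬝ᵥ (lam • 1 - A) *ᵥ x = lam * (x ⬝ᵥ x) - x ⬝ᵥ A *ᵥ x := by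
  rw [sub_mulVec, smul_mulVec, one_mulVec, dotProduct_sub, dotProduct_smul, smul_eq_mul]

lemma dotProduct_mulVec_le_of_posSemidef_smul_one_sub [DecidableEq n] {A : Matrix n n ℝ}
    {lam : ℝ} (h : (lam • 1 - A).PosSemidef) (x : n → ℝ) :
    x ⬝ᵥ A *ᵥ x ≤ lam * (x ⬝ᵥ x) := by
  have := h.dotProduct_mulVec_nonneg x
  rw [star_trivial, dotProduct_smul_one_sub_mulVec] at this
  linarith

/-- Perron–Frobenius for the top of the spectrum: `|v| ⬝ A |v| ≥ v ⬝ A v` for a nonnegative `A`,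
so the positive semidefinite `lam • 1 - A` has a vanishing quadratic form at `|v|`. -/
lemma mulVec_abs_eq_of_posSemidef_smul_one_sub [DecidableEq n] {A : Matrix n n ℝ}
    (hA : ∀ i j, 0 ≤ A i j) {lam : ℝ} (h : (lam • 1 - A).PosSemidef) {v : n → ℝ}
    (hv : A *ᵥ v = lam • v) : A *ᵥ |v| = lam • |v| := by
  have habs : |v| ⬝ᵥ |v| = v ⬝ᵥ v := by
    simp only [dotProduct, Pi.abs_apply, abs_mul_abs_self]
  have hquad : v ⬝ᵥ A *ᵥ v ≤ |v| ⬝ᵥ A *ᵥ |v| := by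
    simp only [dotProduct, mulVec, Pi.abs_apply, Finset.mul_sum]
    refine sum_le_sum fun i _ => sum_le_sum fun j _ => ?_
    calc v i * (A i j * v j) ≤ |v i * (A i j * v j)| := le_abs_self _
      _ = |v i| * (A i j * |v j|) := by rw [abs_mul, abs_mul, abs_of_nonneg (hA i j)]
  have hzero : star |v| ⬝ᵥ (lam • 1 - A) *ᵥ |v| = 0 := by
    have hnonneg := h.dotProduct_mulVec_nonneg |v|
    rw [star_trivial, dotProduct_smul_one_sub_mulVec, habs] at hnonneg ⊢
    rw [hv, dotProduct_smul, smul_eq_mul] at hquad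
    linarith
  have := (h.dotProduct_mulVec_zero_iff |v|).mp hzero
  rwa [sub_mulVec, smul_mulVec, one_mulVec, sub_eq_zero, eq_comm] at this

lemma mulVec_dotProduct_mulVec_self [CommSemiring R] (Γ : Matrix m n R) (y : n → R) :
    Γ *ᵥ y ⬝ᵥ Γ *ᵥ y = y ⬝ᵥ (Γᵀ * Γ) *ᵥ y := by
  rw [← mulVec_mulVec, dotProduct_mulVec y, vecMul_transpose, dotProduct_comm]

variable {Γ : Matrix m n ℝ} {lam : ℝ}

lemma sq_dotProduct_mulVec_le [DecidableEq n] (h : (lam • 1 - Γᵀ * Γ).PosSemidef)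
    (x : m → ℝ) (y : n → ℝ) : (x ⬝ᵥ Γ *ᵥ y) ^ 2 ≤ lam * (x ⬝ᵥ x) * (y ⬝ᵥ y) := by
  calc (x ⬝ᵥ Γ *ᵥ y) ^ 2 ≤ (x ⬝ᵥ x) * (Γ *ᵥ y ⬝ᵥ Γ *ᵥ y) := by
        simpa only [dotProduct, sq] using sum_mul_sq_le_sq_mul_sq univ x (Γ *ᵥ y)
    _ ≤ (x ⬝ᵥ x) * (lam * (y ⬝ᵥ y)) := by
        rw [mulVec_dotProduct_mulVec_self]
        exact mul_le_mul_of_nonneg_left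
          (dotProduct_mulVec_le_of_posSemidef_smul_one_sub h y) (dotProduct_star_self_nonneg x)
    _ = lam * (x ⬝ᵥ x) * (y ⬝ᵥ y) := by ring

lemma pos_of_posSemidef_smul_one_sub_transpose_mul_self [DecidableEq n] (hΓ : Γ ≠ 0)
    (h : (lam • 1 - Γᵀ * Γ).PosSemidef) : 0 < lam := by
  by_contra! hlam
  refine hΓ (ext_of_mulVec_single fun i => ?_)
  have hle := dotProduct_mulVec_le_of_posSemidef_smul_one_sub h (Pi.single i 1)
  rw [← mulVec_dotProduct_mulVec_self, dotProduct_single_one, Pi.single_eq_same, mul_one] at hle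
  have hnonneg := dotProduct_star_self_nonneg (Γ *ᵥ Pi.single i 1)
  rw [star_trivial] at hnonneg
  rw [zero_mulVec, ← dotProduct_self_eq_zero]
  linarith

end Matrix

noncomputable def objective (Γ X : Matrix m n ℝ) : ℝ :=
  ∏ p ∈ univ.filter (fun p : m × n => 0 < X p.1 p.2),
    (Γ p.1 p.2 ^ 2 * (∑ j, X p.1 j) * (∑ i, X i p.2) / X p.1 p.2 ^ 2) ^ X p.1 p.2

def admissibleSet (Γ : Matrix m n ℝ) : Set (Matrix m n ℝ) :=
  {X | (∀ k ℓ, 0 ≤ X k ℓ) ∧ (∑ k, ∑ ℓ, X k ℓ) = 1 ∧ ∀ k ℓ, Γ k ℓ = 0 → X k ℓ = 0}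

variable {Γ X : Matrix m n ℝ} {lam : ℝ}

lemma sum_filter_pos_eq_one (hX0 : ∀ k ℓ, 0 ≤ X k ℓ) (hX1 : ∑ k, ∑ ℓ, X k ℓ = 1) :
    ∑ p ∈ univ.filter (fun p : m × n => 0 < X p.1 p.2), X p.1 p.2 = 1 := by
  rw [sum_filter_of_ne fun p _ hp => (hX0 p.1 p.2).lt_of_ne' hp, ← hX1, Fintype.sum_prod_type]

lemma objective_eq_of_base_eq (hX0 : ∀ k ℓ, 0 ≤ X k ℓ) (hX1 : ∑ k, ∑ ℓ, X k ℓ = 1)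
    {c : ℝ} (hc : 0 < c)
    (h : ∀ k ℓ, 0 < X k ℓ → Γ k ℓ ^ 2 * (∑ j, X k j) * (∑ i, X i ℓ) / X k ℓ ^ 2 = c) :
    objective Γ X = c := by
  unfold objective
  rw [prod_congr rfl fun p hp => by rw [h p.1 p.2 (mem_filter.mp hp).2],
    ← Real.rpow_sum_of_pos hc, sum_filter_pos_eq_one hX0 hX1, Real.rpow_one]

lemma objective_le_sq_dotProduct (hΓ : ∀ k ℓ, 0 ≤ Γ k ℓ) (hX0 : ∀ k ℓ, 0 ≤ X k ℓ)
    (hX1 : ∑ k, ∑ ℓ, X k ℓ = 1) :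
    objective Γ X ≤
      ((fun k => √(∑ j, X k j)) ⬝ᵥ Γ *ᵥ (fun ℓ => √(∑ i, X i ℓ))) ^ 2 := by
  set S := univ.filter (fun p : m × n => 0 < X p.1 p.2)
  set b : m × n → ℝ := fun p => Γ p.1 p.2 * (√(∑ j, X p.1 j) * √(∑ i, X i p.2))
  have hb : ∀ p, 0 ≤ b p := fun p => mul_nonneg (hΓ _ _) (by positivity)
  have hbq : ∀ p ∈ S, X p.1 p.2 * (b p / X p.1 p.2) = b p := fun p hp =>
    mul_div_cancel₀ _ (mem_filter.mp hp).2.ne'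
  have hfactor : ∀ p ∈ S,
      (Γ p.1 p.2 ^ 2 * (∑ j, X p.1 j) * (∑ i, X i p.2) / X p.1 p.2 ^ 2) ^ X p.1 p.2 =
        ((b p / X p.1 p.2) ^ X p.1 p.2) ^ 2 := by
    intro p _
    rw [Real.rpow_pow_comm (div_nonneg (hb p) (hX0 _ _)), div_pow, mul_pow, mul_pow,
      Real.sq_sqrt (sum_nonneg fun j _ => hX0 _ j), Real.sq_sqrt (sum_nonneg fun i _ => hX0 i _),
      mul_assoc]
  have hamgm : ∏ p ∈ S, (b p / X p.1 p.2) ^ X p.1 p.2 ≤ ∑ p ∈ S, b p := by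
    calc ∏ p ∈ S, (b p / X p.1 p.2) ^ X p.1 p.2 ≤ ∑ p ∈ S, X p.1 p.2 * (b p / X p.1 p.2) :=
          Real.geom_mean_le_arith_mean_weighted S (fun p => X p.1 p.2) (fun p => b p / X p.1 p.2)
            (fun p _ => hX0 _ _) (sum_filter_pos_eq_one hX0 hX1)
            (fun p _ => div_nonneg (hb p) (hX0 _ _))
      _ = ∑ p ∈ S, b p := sum_congr rfl hbq
  have hsum : ∑ p ∈ S, b p ≤
      (fun k => √(∑ j, X k j)) ⬝ᵥ Γ *ᵥ (fun ℓ => √(∑ i, X i ℓ)) := by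
    calc ∑ p ∈ S, b p ≤ ∑ p, b p := sum_le_sum_of_subset_of_nonneg (filter_subset _ _)
          fun p _ _ => hb p
      _ = _ := by
        simp only [b, Fintype.sum_prod_type, dotProduct, mulVec, mul_sum]
        exact sum_congr rfl fun k _ => sum_congr rfl fun ℓ _ => by ring
  calc objective Γ X = (∏ p ∈ S, (b p / X p.1 p.2) ^ X p.1 p.2) ^ 2 := by
        rw [← prod_pow]; exact prod_congr rfl hfactor
    _ ≤ _ := pow_le_pow_left₀
          (prod_nonneg fun p _ => Real.rpow_nonneg (div_nonneg (hb p) (hX0 _ _)) _)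
          (hamgm.trans hsum) 2

lemma objective_le [DecidableEq n] (hΓ : ∀ k ℓ, 0 ≤ Γ k ℓ)
    (h : (lam • 1 - Γᵀ * Γ).PosSemidef) (hX0 : ∀ k ℓ, 0 ≤ X k ℓ)
    (hX1 : ∑ k, ∑ ℓ, X k ℓ = 1) : objective Γ X ≤ lam := by
  have hrow : (fun k => √(∑ j, X k j)) ⬝ᵥ (fun k => √(∑ j, X k j)) = 1 := by
    simp only [dotProduct, Real.mul_self_sqrt (sum_nonneg fun j _ => hX0 _ j), hX1]
  have hcol : (fun ℓ => √(∑ i, X i ℓ)) ⬝ᵥ (fun ℓ => √(∑ i, X i ℓ)) = 1 := by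
    simp only [dotProduct, Real.mul_self_sqrt (sum_nonneg fun i _ => hX0 i _)]
    rw [sum_comm, hX1]
  calc objective Γ X ≤ _ := objective_le_sq_dotProduct hΓ hX0 hX1
    _ ≤ lam := by
        simpa only [hrow, hcol, mul_one] using sq_dotProduct_mulVec_le h
          (fun k => √(∑ j, X k j)) (fun ℓ => √(∑ i, X i ℓ))

/-- Since `Γᵀ (Γ v) = lam v`, the witness `X k ℓ = (Γ v) k Γ k ℓ v ℓ / ‖Γ v‖²` has row sums
`(Γ v) k ² / ‖Γ v‖²` and column sums `lam v ℓ ² / ‖Γ v‖²`, so every factor of `objective` is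
`lam`. -/
lemma exists_mem_admissibleSet_objective_eq (hΓ : ∀ k ℓ, 0 ≤ Γ k ℓ) (hlam : 0 < lam)
    {v : n → ℝ} (hv0 : 0 ≤ v) (hv : v ≠ 0) (heig : (Γᵀ * Γ) *ᵥ v = lam • v) :
    ∃ X ∈ admissibleSet Γ, objective Γ X = lam := by
  have hs : Γ *ᵥ v ⬝ᵥ Γ *ᵥ v = lam * (v ⬝ᵥ v) := by
    rw [mulVec_dotProduct_mulVec_self, heig, dotProduct_smul, smul_eq_mul]
  set y := Γ *ᵥ v
  set s := y ⬝ᵥ y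
  have hs_pos : 0 < s := by
    rw [hs]
    exact mul_pos hlam (dotProduct_star_self_pos_iff.mpr hv)
  have hy0 : ∀ k, 0 ≤ y k := fun k => sum_nonneg fun ℓ _ => mul_nonneg (hΓ k ℓ) (hv0 ℓ)
  have hΓty : Γᵀ *ᵥ y = lam • v := by rw [mulVec_mulVec]; exact heig
  set X : Matrix m n ℝ := fun k ℓ => y k * Γ k ℓ * v ℓ / s
  have hX0 : ∀ k ℓ, 0 ≤ X k ℓ := fun k ℓ =>
    div_nonneg (mul_nonneg (mul_nonneg (hy0 k) (hΓ k ℓ)) (hv0 ℓ)) hs_pos.le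
  have hrow : ∀ k, ∑ ℓ, X k ℓ = y k ^ 2 / s := fun k => by
    simp only [X, ← sum_div, mul_assoc, ← mul_sum, sq]
    rfl
  have hcol : ∀ ℓ, ∑ k, X k ℓ = lam * v ℓ ^ 2 / s := fun ℓ => by
    have := congrFun hΓty ℓ
    simp only [mulVec, dotProduct, transpose_apply, Pi.smul_apply, smul_eq_mul] at this
    simp only [X, ← sum_div, ← sum_mul, sq, ← mul_assoc, mul_comm (y _), this]
  have hX1 : ∑ k, ∑ ℓ, X k ℓ = 1 := by
    rw [sum_congr rfl fun k _ => hrow k, ← sum_div, div_eq_one_iff_eq hs_pos.ne']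
    simp only [s, dotProduct, sq]
  refine ⟨X, ⟨hX0, hX1, fun k ℓ h => by simp [X, h]⟩, objective_eq_of_base_eq hX0 hX1 hlam ?_⟩
  intro k ℓ hpos
  obtain ⟨hyΓ, hvℓ⟩ := mul_ne_zero_iff.mp (div_ne_zero_iff.mp hpos.ne').1
  obtain ⟨hyk, hΓkℓ⟩ := mul_ne_zero_iff.mp hyΓ
  rw [hrow, hcol]
  simp only [X]
  field_simp

theorem max_f_eq_greatest_eigenvalue_general {t u : ℕ}
    (Γ : Matrix (Fin t) (Fin u) ℝ)
    (hΓ0 : ∀ k ℓ, 0 ≤ Γ k ℓ)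
    (hne : Γ ≠ 0) (lam : ℝ)
    (hlam : IsGreatest {μ : ℝ | ∃ v : Fin u → ℝ, v ≠ 0 ∧ (Γᵀ * Γ).mulVec v = μ • v}
      lam) :
    IsGreatest
      ((fun X : Matrix (Fin t) (Fin u) ℝ =>
          ∏ p ∈ Finset.univ.filter (fun p : Fin t × Fin u => 0 < X p.1 p.2),
            Real.rpow
              (Γ p.1 p.2 ^ 2 * (∑ j, X p.1 j) * (∑ i, X i p.2) / X p.1 p.2 ^ 2)
              (X p.1 p.2)) ''
        {X | (∀ k ℓ, 0 ≤ X k ℓ) ∧ (∑ k, ∑ ℓ, X k ℓ) = 1 ∧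
          ∀ k ℓ, Γ k ℓ = 0 → X k ℓ = 0})
      lam := by
  change IsGreatest (objective Γ '' admissibleSet Γ) lam
  have hM : (Γᵀ * Γ).IsHermitian := by
    simpa only [conjTranspose_eq_transpose_of_trivial] using isHermitian_conjTranspose_mul_self Γ
  have hN : (lam • 1 - Γᵀ * Γ).PosSemidef :=
    hM.posSemidef_smul_one_sub (hM.eigenvalues_le_of_mem_upperBounds hlam.2)
  have hM0 : ∀ i j, 0 ≤ (Γᵀ * Γ) i j := fun i j => by
    rw [mul_apply]
    exact sum_nonneg fun k _ => mul_nonneg (hΓ0 k i) (hΓ0 k j)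
  obtain ⟨v, hv, hveig⟩ := hlam.1
  refine ⟨?_, ?_⟩
  · exact exists_mem_admissibleSet_objective_eq hΓ0
      (pos_of_posSemidef_smul_one_sub_transpose_mul_self hne hN) (abs_nonneg v)
      (mt (Pi.abs_eq_zero v).mp hv) (mulVec_abs_eq_of_posSemidef_smul_one_sub hM0 hN hveig)
  · rintro _ ⟨X, ⟨hX0, hX1, -⟩, rfl⟩
    exact objective_le hΓ0 hN hX0 hX1

/-- Let `Γ` be a nonzero nonnegative matrix whose nonzero entries are all `≥ 1`,
and let `f` be defined on the admissible domain
`𝒜 = {X : X ≥ 0, Σ X = 1, supp X ⊆ supp Γ}` by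
`f(X) = ∏_{X k ℓ > 0} (Γ k ℓ ² (Σ_j X k j)(Σ_i X i ℓ) / X k ℓ ²)^{X k ℓ}`.
Then the maximum value of `f` on `𝒜` equals the greatest eigenvalue of `ΓᵀΓ`. -/
theorem max_f_eq_greatest_eigenvalue {t u : ℕ}
    (Γ : Matrix (Fin t) (Fin u) ℝ)
    (hΓ0 : ∀ k ℓ, 0 ≤ Γ k ℓ)
    (hΓ1 : ∀ k ℓ, Γ k ℓ ≠ 0 → 1 ≤ Γ k ℓ)
    (hne : Γ ≠ 0) (lam : ℝ)
    (hlam : IsGreatest {μ : ℝ | ∃ v : Fin u → ℝ, v ≠ 0 ∧ (Γᵀ * Γ).mulVec v = μ • v}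
      lam) :
    IsGreatest
      ((fun X : Matrix (Fin t) (Fin u) ℝ =>
          ∏ p ∈ Finset.univ.filter (fun p : Fin t × Fin u => 0 < X p.1 p.2),
            Real.rpow
              (Γ p.1 p.2 ^ 2 * (∑ j, X p.1 j) * (∑ i, X i p.2) / X p.1 p.2 ^ 2)
              (X p.1 p.2)) ''
        {X | (∀ k ℓ, 0 ≤ X k ℓ) ∧ (∑ k, ∑ ℓ, X k ℓ) = 1 ∧
          ∀ k ℓ, Γ k ℓ = 0 → X k ℓ = 0})
      lam :=
  max_f_eq_greatest_eigenvalue_general Γ hΓ0 hne lam hlam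
end
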